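/- Weak duality for discrete SROT: for any f ∈ ℝ^n, g ∈ ℝ^m and any P ∈ Γ(α,β) with nonnegative entries, ⟨f,α⟩ + ⟨g,β⟩ − ε·Σ_{ij} P^{SOT}_{ij}·exp((f_i + g_j − C_{ij})/ε) ≤ ⟨C,P⟩ + ε·KL(P | P^{SOT}), where ε > 0 and P^{SOT} has strictly positive entries. -/
import Mathlib


open Real Finset

lemma aux_pt (t s a : ℝ) (ht : 0 ≤ t) (hs : 0 < s) :
    t * a - s * Real.exp a ≤ t * Real.log (t / s) := by
  rcases eq_or_lt_of_le ht with h | h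
  · have : 0 < s * Real.exp a := by positivity
    simp [← h]; linarith
  · have hx : 0 < s * Real.exp a / t := by positivity
    have := Real.log_le_sub_one_of_pos hx
    have hlog : Real.log (s * Real.exp a / t) = Real.log s + a - Real.log t := by
      rw [Real.log_div (by positivity) (ne_of_gt h), Real.log_mul (ne_of_gt hs)
        (Real.exp_ne_zero a), Real.log_exp]
    rw [hlog] at this
    have hmul := mul_le_mul_of_nonneg_left this (le_of_lt h)
    have ht' : t * (s * Real.exp a / t - 1) = s * Real.exp a - t := by
      field_simp
    rw [ht'] at hmul
    have : t * Real.log (t / s) = t * Real.log t - t * Real.log s := by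
      rw [Real.log_div (ne_of_gt h) (ne_of_gt hs)]; ring
    nlinarith

/-- Weak duality for discrete SROT: for any dual potentials `f, g` and any
feasible plan `P ∈ Γ(α,β)`, the dual objective is at most the primal
objective. -/
theorem stmt8 (n m : ℕ) (ε : ℝ) (hε : 0 < ε)
    (C PSOT : Matrix (Fin n) (Fin m) ℝ) (hPSOT : ∀ i j, 0 < PSOT i j)
    (α : Fin n → ℝ) (β : Fin m → ℝ)
    (hα : ∀ i, 0 < α i) (hβ : ∀ j, 0 < β j)
    (hαs : ∑ i, α i = 1) (hβs : ∑ j, β j = 1)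
    (f : Fin n → ℝ) (g : Fin m → ℝ)
    (P : Matrix (Fin n) (Fin m) ℝ) (hP : ∀ i j, 0 ≤ P i j)
    (hProw : ∀ i, ∑ j, P i j = α i) (hPcol : ∀ j, ∑ i, P i j = β j) :
    (∑ i, f i * α i) + (∑ j, g j * β j)
        - ε * ∑ i, ∑ j, PSOT i j * Real.exp ((f i + g j - C i j) / ε)
      ≤ (∑ i, ∑ j, C i j * P i j)
        + ε * ∑ i, ∑ j, P i j * Real.log (P i j / PSOT i j) := by
  have key : ∀ i j, P i j * (f i + g j - C i j)
      - ε * (PSOT i j * Real.exp ((f i + g j - C i j) / ε))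
      ≤ ε * (P i j * Real.log (P i j / PSOT i j)) := by
    intro i j
    have h := aux_pt (P i j) (PSOT i j) ((f i + g j - C i j) / ε) (hP i j) (hPSOT i j)
    have hmul := mul_le_mul_of_nonneg_left h (le_of_lt hε)
    have : ε * (P i j * ((f i + g j - C i j) / ε)) = P i j * (f i + g j - C i j) := by
      field_simp
    nlinarith
  have hsum : ∑ i, ∑ j, (P i j * (f i + g j - C i j)
      - ε * (PSOT i j * Real.exp ((f i + g j - C i j) / ε)))
      ≤ ∑ i, ∑ j, ε * (P i j * Real.log (P i j / PSOT i j)) :=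
    Finset.sum_le_sum fun i _ => Finset.sum_le_sum fun j _ => key i j
  have hL : ∑ i, ∑ j, (P i j * (f i + g j - C i j)
      - ε * (PSOT i j * Real.exp ((f i + g j - C i j) / ε)))
      = (∑ i, f i * α i) + (∑ j, g j * β j) - (∑ i, ∑ j, C i j * P i j)
        - ε * ∑ i, ∑ j, PSOT i j * Real.exp ((f i + g j - C i j) / ε) := by
    have e1 : ∑ i, ∑ j, P i j * f i = ∑ i, f i * α i := by
      refine Finset.sum_congr rfl fun i _ => ?_
      rw [← Finset.sum_mul, hProw i, mul_comm]
    have e2 : ∑ i, ∑ j, P i j * g j = ∑ j, g j * β j := by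
      rw [Finset.sum_comm]
      refine Finset.sum_congr rfl fun j _ => ?_
      rw [← Finset.sum_mul, hPcol j, mul_comm]
    have e3 : ∑ i, ∑ j, P i j * C i j = ∑ i, ∑ j, C i j * P i j := by
      simp [mul_comm]
    calc ∑ i, ∑ j, (P i j * (f i + g j - C i j)
        - ε * (PSOT i j * Real.exp ((f i + g j - C i j) / ε)))
        = (∑ i, ∑ j, P i j * f i) + (∑ i, ∑ j, P i j * g j)
          - (∑ i, ∑ j, P i j * C i j)
          - ε * ∑ i, ∑ j, PSOT i j * Real.exp ((f i + g j - C i j) / ε) := by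
          simp only [Finset.mul_sum, ← Finset.sum_sub_distrib, ← Finset.sum_add_distrib]
          refine Finset.sum_congr rfl fun i _ => Finset.sum_congr rfl fun j _ => ?_
          ring
      _ = _ := by rw [e1, e2, e3]
  have hR : ∑ i, ∑ j, ε * (P i j * Real.log (P i j / PSOT i j))
      = ε * ∑ i, ∑ j, P i j * Real.log (P i j / PSOT i j) := by
    simp [Finset.mul_sum]
  rw [hL, hR] at hsum
  linarith
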